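/- (Generalized Jung theorem) Let S ⊆ ℝ² be bounded with diam(S) = δ and 3-diameter diam₃(S) = τ ≤ δ. Then S is contained in a closed disk of radius ρ = δ²/(2·√(δ² − τ²/4)). -/

import Mathlib

/-!
By Helly's theorem for the (compact, convex) disks of radius `ρ` centred at the points of `S`,
it suffices to cover any three points of `S` by one such disk. Two of the three points, `p` and
`q`, are at distance at most `τ`, and all distances are at most `δ`. With `m` the midpoint of
`pq` and `r` the third point, the disk about `m` works if `|r - m| ≤ ρ`; otherwise the centre is
the point of the segment `mr` at distance `ρ` from `r`, and the required bound reduces to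
`(2ρ|r - m| - δ²)² ≥ 0` via `ρ²(4δ² - τ²) = δ⁴`.
-/

open Metric Real

noncomputable def diam₃ (S : Set (EuclideanSpace ℝ (Fin 2))) : ℝ :=
  sSup {x : ℝ | ∃ p ∈ S, ∃ q ∈ S, ∃ r ∈ S,
    x = min (dist p q) (min (dist q r) (dist p r))}

open Module Finset in
theorem exists_subset_closedBall_of_forall_finset {E : Type*} [NormedAddCommGroup E]
    [NormedSpace ℝ E] [FiniteDimensional ℝ E] {S : Set E} {ρ : ℝ}
    (h : ∀ I : Finset E, (I : Set E) ⊆ S → #I ≤ finrank ℝ E + 1 →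
      ∃ c, (I : Set E) ⊆ closedBall c ρ) :
    ∃ c, S ⊆ closedBall c ρ := by
  classical
  obtain ⟨c, hc⟩ : (⋂ p : S, closedBall (p : E) ρ).Nonempty := by
    refine Convex.helly_theorem_compact' (fun _ ↦ convex_closedBall _ _)
      (fun _ ↦ isCompact_closedBall _ _) fun I hI ↦ ?_
    obtain ⟨c, hc⟩ := h (I.map (Function.Embedding.subtype _)) (by simp) (by simpa using hI)
    refine ⟨c, Set.mem_iInter₂.2 fun p hp ↦ mem_closedBall_comm.1 (hc ?_)⟩
    exact Finset.mem_coe.2 (Finset.mem_map_of_mem _ hp)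
  exact ⟨c, fun p hp ↦ mem_closedBall_comm.1 (Set.mem_iInter.1 hc ⟨p, hp⟩)⟩

theorem Finset.exists_subset_triple_of_card_le_three {α : Type*} [DecidableEq α]
    {I : Finset α} (hI : I.Nonempty) (h : I.card ≤ 3) :
    ∃ a ∈ I, ∃ b ∈ I, ∃ c ∈ I, I ⊆ {a, b, c} := by
  have : 1 ≤ I.card := hI.card_pos
  interval_cases hc : I.card
  · obtain ⟨a, rfl⟩ := Finset.card_eq_one.1 hc
    exact ⟨a, by simp, a, by simp, a, by simp, by simp⟩
  · obtain ⟨a, b, -, rfl⟩ := Finset.card_eq_two.1 hc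
    exact ⟨a, by simp, b, by simp, b, by simp, by simp⟩
  · obtain ⟨a, b, c, -, -, -, rfl⟩ := Finset.card_eq_three.1 hc
    exact ⟨a, by simp, b, by simp, c, by simp, subset_rfl⟩

open scoped RealInnerProductSpace

namespace GeneralizedJung

theorem sq_le_of_pow_four_le {δ ρ b : ℝ} (hρ : 0 ≤ ρ) (hb : b ^ 2 ≤ δ ^ 2)
    (h : δ ^ 4 ≤ 4 * ρ ^ 2 * (δ ^ 2 - b ^ 2)) : b ^ 2 ≤ ρ ^ 2 := by
  rcases hρ.eq_or_lt with rfl | hρ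
  · nlinarith [sq_nonneg b, mul_le_mul hb hb (sq_nonneg b) ((sq_nonneg b).trans hb)]
  · nlinarith [sq_nonneg (δ ^ 2 - 2 * ρ ^ 2), sq_nonneg b, mul_pos hρ hρ]

/-- `d = ‖r - m‖`, `b = ‖q - p‖ / 2`, `x = |⟪r - m, q - m⟫|`, and `1 - s = ρ / d`. -/
theorem median_point_ineq {δ ρ b d x s : ℝ} (hρ : 0 ≤ ρ) (hd : ρ < d) (hs : s * d = d - ρ)
    (hsum : d ^ 2 + 2 * x + b ^ 2 ≤ δ ^ 2) (h : δ ^ 4 ≤ 4 * ρ ^ 2 * (δ ^ 2 - b ^ 2)) :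
    s ^ 2 * d ^ 2 + 2 * s * x + b ^ 2 ≤ ρ ^ 2 := by
  have hd₀ : 0 < d := hρ.trans_lt hd
  have h₁ : 0 ≤ ρ * d ^ 2 - δ ^ 2 * d + ρ * (δ ^ 2 - b ^ 2) := by
    rcases hρ.eq_or_lt with rfl | hρ
    · nlinarith [sq_nonneg δ, sq_nonneg (δ ^ 2)]
    · nlinarith [sq_nonneg (2 * ρ * d - δ ^ 2)]
  have h₂ : (d - ρ) * (2 * x) ≤ (d - ρ) * (δ ^ 2 - b ^ 2 - d ^ 2) :=
    mul_le_mul_of_nonneg_left (by linarith) (by linarith)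
  refine le_of_mul_le_mul_right ?_ hd₀
  calc (s ^ 2 * d ^ 2 + 2 * s * x + b ^ 2) * d
      = (s * d) ^ 2 * d + s * d * (2 * x) + b ^ 2 * d := by ring
    _ ≤ ρ ^ 2 * d := by rw [hs]; nlinarith

end GeneralizedJung

open GeneralizedJung in
/-- With `m` the midpoint of `pq`: `p = m - v`, `q = m + v`, `r = m + w`, centre `m + s • w`. -/
theorem exists_smul_add_norm_le {E : Type*} [NormedAddCommGroup E] [InnerProductSpace ℝ E]
    {v w : E} {δ ρ : ℝ} (hρ : 0 ≤ ρ) (hadd : ‖w + v‖ ≤ δ) (hsub : ‖w - v‖ ≤ δ)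
    (h : δ ^ 4 ≤ 4 * ρ ^ 2 * (δ ^ 2 - ‖v‖ ^ 2)) :
    ∃ s : ℝ, ‖w - s • w‖ ≤ ρ ∧ ‖s • w + v‖ ≤ ρ ∧ ‖s • w - v‖ ≤ ρ := by
  have hsum : ‖w‖ ^ 2 + 2 * |⟪w, v⟫| + ‖v‖ ^ 2 ≤ δ ^ 2 := by
    have hadd' := pow_le_pow_left₀ (norm_nonneg _) hadd 2
    have hsub' := pow_le_pow_left₀ (norm_nonneg _) hsub 2
    rw [norm_add_sq_real] at hadd'
    rw [norm_sub_sq_real] at hsub'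
    cases abs_cases ⟪w, v⟫ <;> linarith
  have hcenter : ∀ s : ℝ, 0 ≤ s → s ^ 2 * ‖w‖ ^ 2 + 2 * s * |⟪w, v⟫| + ‖v‖ ^ 2 ≤ ρ ^ 2 →
      ‖s • w + v‖ ≤ ρ ∧ ‖s • w - v‖ ≤ ρ := by
    intro s hs hle
    have hle_abs := mul_le_mul_of_nonneg_left (le_abs_self ⟪w, v⟫) hs
    have hneg_abs := mul_le_mul_of_nonneg_left (neg_abs_le ⟪w, v⟫) hs
    refine ⟨(pow_le_pow_iff_left₀ (norm_nonneg _) hρ two_ne_zero).1 ?_,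
      (pow_le_pow_iff_left₀ (norm_nonneg _) hρ two_ne_zero).1 ?_⟩
    · rw [norm_add_sq_real, real_inner_smul_left, norm_smul, mul_pow, norm_eq_abs, sq_abs]
      nlinarith
    · rw [norm_sub_sq_real, real_inner_smul_left, norm_smul, mul_pow, norm_eq_abs, sq_abs]
      nlinarith
  rcases le_or_gt ‖w‖ ρ with hd | hd
  · have hv : ‖v‖ ^ 2 ≤ ρ ^ 2 :=
      sq_le_of_pow_four_le hρ (by nlinarith [abs_nonneg ⟪w, v⟫, sq_nonneg ‖w‖]) h
    exact ⟨0, by simpa using hd, hcenter 0 le_rfl (by simpa using hv)⟩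
  · have hw : 0 < ‖w‖ := hρ.trans_lt hd
    refine ⟨1 - ρ / ‖w‖, ?_, hcenter _ ?_ (median_point_ineq hρ hd ?_ hsum h)⟩
    · rw [show w - (1 - ρ / ‖w‖) • w = (ρ / ‖w‖) • w by module, norm_smul, norm_div,
        norm_norm, norm_eq_abs, abs_of_nonneg hρ, div_mul_cancel₀ _ hw.ne']
    · rw [sub_nonneg, div_le_one hw]; exact hd.le
    · field_simp

theorem exists_subset_closedBall_of_dist_le {E : Type*} [NormedAddCommGroup E]
    [InnerProductSpace ℝ E] {p q r : E} {δ ρ : ℝ} (hρ : 0 ≤ ρ) (hpr : dist p r ≤ δ)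
    (hqr : dist q r ≤ δ) (h : δ ^ 4 ≤ ρ ^ 2 * (4 * δ ^ 2 - dist p q ^ 2)) :
    ∃ c, {p, q, r} ⊆ closedBall c ρ := by
  set v : E := (2 : ℝ)⁻¹ • (q - p)
  set w : E := r - (p + v)
  have hv : dist p q = 2 * ‖v‖ := by
    rw [norm_smul, dist_eq_norm']; norm_num; ring
  obtain ⟨s, hr, hp, hq⟩ := exists_smul_add_norm_le (v := v) (w := w) (δ := δ) hρ
    (by rwa [show w + v = r - p by module, ← dist_eq_norm'])
    (by rwa [show w - v = r - q by module, ← dist_eq_norm'])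
    (by rw [hv] at h; linarith)
  refine ⟨p + v + s • w, ?_⟩
  simp only [Set.insert_subset_iff, Set.singleton_subset_iff, mem_closedBall, dist_eq_norm]
  refine ⟨?_, ?_, ?_⟩
  · rwa [show p - (p + v + s • w) = -(s • w + v) by module, norm_neg]
  · rwa [show q - (p + v + s • w) = -(s • w - v) by module, norm_neg]
  · rwa [show r - (p + v + s • w) = w - s • w by module]

theorem exists_subset_closedBall_of_min_dist_le {E : Type*} [NormedAddCommGroup E]
    [InnerProductSpace ℝ E] {p q r : E} {δ τ ρ : ℝ} (hρ : 0 ≤ ρ) (hpq : dist p q ≤ δ)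
    (hqr : dist q r ≤ δ) (hpr : dist p r ≤ δ)
    (hmin : min (dist p q) (min (dist q r) (dist p r)) ≤ τ)
    (h : δ ^ 4 ≤ ρ ^ 2 * (4 * δ ^ 2 - τ ^ 2)) :
    ∃ c, {p, q, r} ⊆ closedBall c ρ := by
  have hτ {x y : E} (hxy : dist x y ≤ τ) : δ ^ 4 ≤ ρ ^ 2 * (4 * δ ^ 2 - dist x y ^ 2) :=
    h.trans (by gcongr)
  rcases min_le_iff.1 hmin with h₁ | h₂
  · exact exists_subset_closedBall_of_dist_le hρ hpr hqr (hτ h₁)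
  rcases min_le_iff.1 h₂ with h₂ | h₃
  · obtain ⟨c, hc⟩ := exists_subset_closedBall_of_dist_le hρ (dist_comm q p ▸ hpq)
      (dist_comm r p ▸ hpr) (hτ h₂)
    exact ⟨c, by rwa [Set.pair_comm r p, Set.insert_comm q p] at hc⟩
  · obtain ⟨c, hc⟩ := exists_subset_closedBall_of_dist_le hρ hpq (dist_comm r q ▸ hqr) (hτ h₃)
    exact ⟨c, by rwa [Set.pair_comm r q] at hc⟩

open Module in
theorem exists_subset_closedBall_of_forall_triple {E : Type*} [NormedAddCommGroup E]
    [NormedSpace ℝ E] [FiniteDimensional ℝ E] (hE : finrank ℝ E = 2) {S : Set E} {ρ : ℝ}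
    (h : ∀ p ∈ S, ∀ q ∈ S, ∀ r ∈ S, ∃ c, {p, q, r} ⊆ closedBall c ρ) :
    ∃ c, S ⊆ closedBall c ρ := by
  classical
  refine exists_subset_closedBall_of_forall_finset fun I hIS hI ↦ ?_
  rcases I.eq_empty_or_nonempty with rfl | hne
  · exact ⟨0, by simp⟩
  obtain ⟨a, ha, b, hb, c, hc, hsub⟩ :=
    I.exists_subset_triple_of_card_le_three hne (by rwa [hE] at hI)
  obtain ⟨x, hx⟩ := h a (hIS ha) b (hIS hb) c (hIS hc)
  exact ⟨x, fun y hy ↦ hx (by simpa using hsub hy)⟩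

noncomputable def jungRadius (δ τ : ℝ) : ℝ := δ ^ 2 / (2 * √(δ ^ 2 - τ ^ 2 / 4))

theorem jungRadius_nonneg (δ τ : ℝ) : 0 ≤ jungRadius δ τ := by
  unfold jungRadius; positivity

theorem pow_four_le_jungRadius_sq_mul {δ τ : ℝ} (hτ : 0 ≤ τ) (hτδ : τ ≤ δ) :
    δ ^ 4 ≤ jungRadius δ τ ^ 2 * (4 * δ ^ 2 - τ ^ 2) := by
  rcases (show 0 ≤ δ ^ 2 - τ ^ 2 / 4 by nlinarith).eq_or_lt with hk | hk
  · obtain rfl : δ = 0 := by nlinarith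
    obtain rfl : τ = 0 := by linarith
    simp
  refine le_of_eq ?_
  rw [jungRadius, div_pow, mul_pow, sq_sqrt hk.le,
    show 4 * δ ^ 2 - τ ^ 2 = 4 * (δ ^ 2 - τ ^ 2 / 4) by ring]
  generalize δ ^ 2 - τ ^ 2 / 4 = k at hk ⊢
  field_simp
  ring

theorem diam₃_nonneg (S : Set (EuclideanSpace ℝ (Fin 2))) : 0 ≤ diam₃ S :=
  Real.sSup_nonneg fun _ ⟨_, _, _, _, _, _, hx⟩ ↦
    hx ▸ le_min dist_nonneg (le_min dist_nonneg dist_nonneg)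

theorem min_dist_le_diam₃ {S : Set (EuclideanSpace ℝ (Fin 2))} (hS : Bornology.IsBounded S)
    {p q r : EuclideanSpace ℝ (Fin 2)} (hp : p ∈ S) (hq : q ∈ S) (hr : r ∈ S) :
    min (dist p q) (min (dist q r) (dist p r)) ≤ diam₃ S := by
  refine le_csSup ⟨diam S, ?_⟩ ⟨p, hp, q, hq, r, hr, rfl⟩
  rintro _ ⟨p, hp, q, hq, r, hr, rfl⟩
  exact (min_le_left _ _).trans (dist_le_diam_of_mem hS hp hq)

theorem generalized_jung (S : Set (EuclideanSpace ℝ (Fin 2))) (δ τ : ℝ)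
    (hb : Bornology.IsBounded S) (hdiam : Metric.diam S = δ)
    (hdiam3 : diam₃ S = τ) (hτδ : τ ≤ δ) :
    ∃ c : EuclideanSpace ℝ (Fin 2),
      S ⊆ Metric.closedBall c (δ ^ 2 / (2 * Real.sqrt (δ ^ 2 - τ ^ 2 / 4))) := by
  have hdist {p q} (hp : p ∈ S) (hq : q ∈ S) : dist p q ≤ δ :=
    hdiam ▸ dist_le_diam_of_mem hb hp hq
  have hτ : 0 ≤ τ := hdiam3 ▸ diam₃_nonneg S
  refine exists_subset_closedBall_of_forall_triple finrank_euclideanSpace_fin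
    fun p hp q hq r hr ↦ ?_
  exact exists_subset_closedBall_of_min_dist_le (jungRadius_nonneg δ τ) (hdist hp hq)
    (hdist hq hr) (hdist hp hr) (hdiam3 ▸ min_dist_le_diam₃ hb hp hq hr)
    (pow_four_le_jungRadius_sq_mul hτ hτδ)
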